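/- Let K be a field of characteristic 2 and n ≥ 2 an integer. Let 𝒮 be a non-empty affine subspace of the space of n×n symmetric matrices over K in which every matrix is singular, and let S denote its translation vector space. Then either n is odd and 𝒮 equals the full space of n×n alternating matrices over K, or there exists a linear hyperplane H of Kⁿ such that S_H does not contain (Alt_n(K))_H, where Alt_n(K) denotes the space of n×n alternating matrices. -/

import Mathlib

open Matrix

/-- For a linear subspace `D` of `n × n` matrices and a subspace `H` of `Kⁿ`,
the subspace `D_H` of all matrices `N ∈ D` such that `Xᵀ N Y = 0` for all `X, Y ∈ H`. -/
def matHyp {K : Type*} [Field K] {n : ℕ} (D : Submodule K (Matrix (Fin n) (Fin n) K))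
    (H : Submodule K (Fin n → K)) : Submodule K (Matrix (Fin n) (Fin n) K) where
  carrier := {N | N ∈ D ∧ ∀ X ∈ H, ∀ Y ∈ H, X ⬝ᵥ N *ᵥ Y = 0}
  add_mem' := by
    rintro a b ⟨haD, ha⟩ ⟨hbD, hb⟩
    refine ⟨D.add_mem haD hbD, fun X hX Y hY => ?_⟩
    rw [Matrix.add_mulVec, dotProduct_add, ha X hX Y hY, hb X hX Y hY, add_zero]
  zero_mem' := by
    refine ⟨D.zero_mem, fun X hX Y hY => ?_⟩
    rw [Matrix.zero_mulVec, dotProduct_zero]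
  smul_mem' := by
    rintro c a ⟨haD, ha⟩
    refine ⟨D.smul_mem c haD, fun X hX Y hY => ?_⟩
    rw [Matrix.smul_mulVec, dotProduct_smul, ha X hX Y hY, smul_zero]

/-!
If every `S_H` contains `(Alt_n)_H`, then `S` contains all of `Alt_n`: an alternating matrix is a
sum of rank-two alternating matrices `l e_jᵀ - e_j lᵀ`, each of which vanishes on the hyperplane
`X_j = 0`. Hence `B + Alt_n ⊆ 𝒮` for every `B ∈ 𝒮`. In characteristic 2 the alternating matrices
are the symmetric matrices with zero diagonal, so `𝒮` contains every symmetric matrix with the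
same diagonal as `B`. One of them is invertible (block diagonal with `2 × 2` blocks
`[[a, c], [c, b]]`, plus a `1 × 1` block `[d]` with `d ≠ 0` if `n` is odd) unless `n` is odd and
the diagonal of `B` vanishes. So `n` is odd and `𝒮 = Alt_n`.
-/

section InvertibleSymm

variable {K : Type*} [Field K] {ι κ : Type*} [Fintype ι] [DecidableEq ι] [Fintype κ] [DecidableEq κ]

def IsDiagOfInvertibleSymm (d : ι → K) : Prop :=
  ∃ M : Matrix ι ι K, M.IsSymm ∧ M.diag = d ∧ M.det ≠ 0

theorem IsDiagOfInvertibleSymm.of_comp_equiv {d : κ → K} (e : ι ≃ κ)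
    (h : IsDiagOfInvertibleSymm (d ∘ e)) : IsDiagOfInvertibleSymm d := by
  obtain ⟨M, hsymm, hdiag, hdet⟩ := h
  refine ⟨reindex e e M, hsymm.submatrix _, ?_, by rwa [det_reindex_self]⟩
  rw [reindex_apply, diag_submatrix, hdiag, Function.comp_assoc, e.self_comp_symm,
    Function.comp_id]

theorem isDiagOfInvertibleSymm_fin_two (a b : K) : IsDiagOfInvertibleSymm ![a, b] := by
  have hdiag (c : K) : (!![a, c; c, b]).diag = ![a, b] := by
    ext i; fin_cases i <;> rfl
  have hsymm (c : K) : (!![a, c; c, b]).IsSymm := by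
    ext i j; fin_cases i <;> fin_cases j <;> rfl
  by_cases hab : a * b = 1
  · exact ⟨!![a, 0; 0, b], hsymm 0, hdiag 0, by simp [det_fin_two_of, hab]⟩
  · exact ⟨!![a, 1; 1, b], hsymm 1, hdiag 1, by
      rw [det_fin_two_of, mul_one, sub_ne_zero]; exact hab⟩

theorem isDiagOfInvertibleSymm_fin_two_prod (d : Fin 2 × κ → K) :
    IsDiagOfInvertibleSymm d := by
  choose M hsymm hdiag hdet using fun k => isDiagOfInvertibleSymm_fin_two (d (0, k)) (d (1, k))
  refine ⟨blockDiagonal M, ?_, ?_, ?_⟩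
  · rw [IsSymm, blockDiagonal_transpose]
    exact congrArg blockDiagonal (funext hsymm)
  · ext ⟨i, k⟩
    rw [diag_apply, blockDiagonal_apply_eq]
    have := congrFun (hdiag k) i
    fin_cases i <;> exact this
  · rw [det_blockDiagonal]
    exact Finset.prod_ne_zero_iff.mpr fun k _ => hdet k

theorem isDiagOfInvertibleSymm_of_even_card (d : ι → K) (h : Even (Fintype.card ι)) :
    IsDiagOfInvertibleSymm d := by
  obtain ⟨k, hk⟩ := h
  have hcard : Fintype.card (Fin 2 × Fin k) = Fintype.card ι := by simp [hk, two_mul]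
  exact .of_comp_equiv (Fintype.equivOfCardEq hcard) (isDiagOfInvertibleSymm_fin_two_prod _)

theorem IsDiagOfInvertibleSymm.sum {d : ι ⊕ κ → K} (hl : IsDiagOfInvertibleSymm (d ∘ Sum.inl))
    (hr : IsDiagOfInvertibleSymm (d ∘ Sum.inr)) : IsDiagOfInvertibleSymm d := by
  obtain ⟨A, hAsymm, hAdiag, hAdet⟩ := hl
  obtain ⟨B, hBsymm, hBdiag, hBdet⟩ := hr
  refine ⟨fromBlocks A 0 0 B, hAsymm.fromBlocks transpose_zero hBsymm, ?_, ?_⟩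
  · ext (i | j)
    · exact congrFun hAdiag i
    · exact congrFun hBdiag j
  · rw [det_fromBlocks_zero₂₁]
    exact mul_ne_zero hAdet hBdet

theorem isDiagOfInvertibleSymm_of_unique [Unique ι] {d : ι → K} (h : d default ≠ 0) :
    IsDiagOfInvertibleSymm d :=
  ⟨diagonal d, isSymm_diagonal d, diag_diagonal d, by
    rwa [det_diagonal, Fintype.prod_unique]⟩

theorem isDiagOfInvertibleSymm_of_even_card_or_ne_zero (d : ι → K)
    (h : Even (Fintype.card ι) ∨ d ≠ 0) : IsDiagOfInvertibleSymm d := by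
  rcases Nat.even_or_odd (Fintype.card ι) with heven | hodd
  · exact isDiagOfInvertibleSymm_of_even_card d heven
  obtain ⟨i, hi⟩ : ∃ i, d i ≠ 0 :=
    Function.ne_iff.mp (h.resolve_left (Nat.not_even_iff_odd.mpr hodd))
  refine .of_comp_equiv (Equiv.sumCompl (· = i)) (.sum ?_ ?_)
  · let : Unique {a // a = i} := Unique.subtypeEq i
    exact isDiagOfInvertibleSymm_of_unique hi
  · apply isDiagOfInvertibleSymm_of_even_card
    rw [Fintype.card_subtype_compl, Fintype.card_subtype_eq]
    exact Nat.Odd.sub_odd hodd odd_one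

end InvertibleSymm

section Alternating

variable (K ι : Type*) [CommRing K] [Fintype ι]

def altMatrices : Submodule K (Matrix ι ι K) where
  carrier := {M | ∀ X : ι → K, X ⬝ᵥ M *ᵥ X = 0}
  add_mem' {M N} hM hN X := by rw [add_mulVec, dotProduct_add, hM X, hN X, add_zero]
  zero_mem' X := by rw [zero_mulVec, dotProduct_zero]
  smul_mem' c M hM X := by rw [smul_mulVec, dotProduct_smul, hM X, smul_zero]

variable {K ι}

def wedge (u v : ι → K) : Matrix ι ι K := vecMulVec u v - vecMulVec v u

theorem dotProduct_wedge_mulVec (u v X Y : ι → K) :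
    X ⬝ᵥ wedge u v *ᵥ Y = (X ⬝ᵥ u) * (v ⬝ᵥ Y) - (X ⬝ᵥ v) * (u ⬝ᵥ Y) := by
  simp only [wedge, sub_mulVec, dotProduct_sub, vecMulVec_mulVec, op_smul_eq_smul,
    dotProduct_smul, smul_eq_mul]
  ring

theorem wedge_mem_altMatrices (u v : ι → K) : wedge u v ∈ altMatrices K ι := fun X => by
  rw [dotProduct_wedge_mulVec, dotProduct_comm u, dotProduct_comm v]
  ring

variable [DecidableEq ι]

theorem diag_eq_zero_of_mem_altMatrices {M : Matrix ι ι K} (hM : M ∈ altMatrices K ι) :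
    M.diag = 0 := by
  ext i
  simpa [mulVec_single] using hM (Pi.single i 1)

theorem transpose_eq_neg_of_mem_altMatrices {M : Matrix ι ι K} (hM : M ∈ altMatrices K ι) :
    Mᵀ = -M := by
  ext i j
  have hi : M i i = 0 := congrFun (diag_eq_zero_of_mem_altMatrices hM) i
  have hj : M j j = 0 := congrFun (diag_eq_zero_of_mem_altMatrices hM) j
  have hij := hM (Pi.single i 1 + Pi.single j 1)
  simp only [mulVec_add, mulVec_single, MulOpposite.op_one, one_smul, dotProduct_add,
    add_dotProduct, single_dotProduct, col_apply, one_mul] at hij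
  rw [transpose_apply, neg_apply]
  linear_combination hij - hi - hj

variable [CharP K 2]

theorem mem_altMatrices_of_isSymm {M : Matrix ι ι K} (hsymm : M.IsSymm) (hdiag : M.diag = 0) :
    M ∈ altMatrices K ι := by
  -- in characteristic 2 the quadratic form of a symmetric matrix is additive, so it suffices
  -- that it vanishes on the coordinate axes
  let Q : (ι → K) →+ K := AddMonoidHom.mk' (fun X => X ⬝ᵥ M *ᵥ X) fun X Y => by
    have hYX : Y ⬝ᵥ M *ᵥ X = X ⬝ᵥ M *ᵥ Y := by
      rw [dotProduct_mulVec, dotProduct_comm, ← mulVec_transpose, hsymm]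
    show (X + Y) ⬝ᵥ M *ᵥ (X + Y) = X ⬝ᵥ M *ᵥ X + Y ⬝ᵥ M *ᵥ Y
    rw [mulVec_add, add_dotProduct, dotProduct_add, dotProduct_add, hYX]
    linear_combination CharTwo.add_self_eq_zero (X ⬝ᵥ M *ᵥ Y)
  intro X
  rw [← Finset.univ_sum_single X]
  refine (map_sum Q _ _).trans (Finset.sum_eq_zero fun i _ => ?_)
  simp [Q, mulVec_single, single_dotProduct, ← diag_apply, hdiag]

theorem mem_altMatrices_iff {M : Matrix ι ι K} :
    M ∈ altMatrices K ι ↔ M.IsSymm ∧ M.diag = 0 := by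
  refine ⟨fun hM => ⟨?_, diag_eq_zero_of_mem_altMatrices hM⟩,
    fun h => mem_altMatrices_of_isSymm h.1 h.2⟩
  rw [IsSymm, transpose_eq_neg_of_mem_altMatrices hM]
  ext i j
  exact CharTwo.neg_eq (M i j)

end Alternating

theorem eq_sum_wedge_of_mem_altMatrices {K ι : Type*} [CommRing K] [Fintype ι] [LinearOrder ι]
    {M : Matrix ι ι K} (hM : M ∈ altMatrices K ι) :
    M = ∑ j, wedge (fun a => if j < a then M a j else 0) (Pi.single j 1) := by
  ext a b
  have hentry (j : ι) : wedge (fun a => if j < a then M a j else 0) (Pi.single j 1) a b =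
      (if b = j then (if j < a then M a j else 0) else 0) -
        (if a = j then (if j < b then M b j else 0) else 0) := by
    by_cases hb : b = j <;> by_cases ha : a = j <;> simp [wedge, vecMulVec_apply, hb, ha]
  rw [Matrix.sum_apply, Fintype.sum_congr _ _ hentry, Finset.sum_sub_distrib, Finset.sum_ite_eq,
    Finset.sum_ite_eq, if_pos (Finset.mem_univ _), if_pos (Finset.mem_univ _)]
  have hba : M b a = -M a b := congrFun (congrFun (transpose_eq_neg_of_mem_altMatrices hM) a) b
  rcases lt_trichotomy a b with hab | rfl | hab
  · rw [if_neg hab.not_gt, if_pos hab, hba, zero_sub, neg_neg]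
  · rw [if_neg (lt_irrefl a), sub_zero]; exact congrFun (diag_eq_zero_of_mem_altMatrices hM) a
  · rw [if_pos hab, if_neg hab.not_gt, sub_zero]

theorem isCoatom_ker_proj {K : Type*} [DivisionRing K] {ι : Type*} (j : ι) :
    IsCoatom (LinearMap.ker (LinearMap.proj j : (ι → K) →ₗ[K] K)) :=
  LinearMap.isCoatom_ker_of_surjective (LinearMap.proj_surjective j)

theorem altMatrices_le_of_forall_matHyp_le {K : Type*} [Field K] {n : ℕ}
    (D : Submodule K (Matrix (Fin n) (Fin n) K))
    (h : ∀ H, IsCoatom H → matHyp (altMatrices K (Fin n)) H ≤ matHyp D H) :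
    altMatrices K (Fin n) ≤ D := by
  intro M hM
  rw [eq_sum_wedge_of_mem_altMatrices hM]
  refine D.sum_mem fun j _ => (h _ (isCoatom_ker_proj j) ⟨wedge_mem_altMatrices _ _, ?_⟩).1
  intro X hX Y hY
  rw [dotProduct_wedge_mulVec, single_dotProduct, dotProduct_single, show Y j = 0 from hY,
    show X j = 0 from hX, mul_zero, zero_mul, mul_zero, zero_mul, sub_zero]

theorem odd_card_and_mem_altMatrices_of_altMatrices_le_direction {K : Type*} [Field K]
    [CharP K 2] {ι : Type*} [Fintype ι] [DecidableEq ι] {𝒮 : AffineSubspace K (Matrix ι ι K)}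
    (hsymm : ∀ M ∈ 𝒮, M.IsSymm) (hsing : ∀ M ∈ 𝒮, M.det = 0)
    (halt : altMatrices K ι ≤ 𝒮.direction) {B : Matrix ι ι K} (hB : B ∈ 𝒮) :
    Odd (Fintype.card ι) ∧ B ∈ altMatrices K ι := by
  have hBsymm := hsymm B hB
  have hB_diag : ¬ IsDiagOfInvertibleSymm B.diag := by
    rintro ⟨M, hMsymm, hMdiag, hMdet⟩
    have hMB : M - B ∈ altMatrices K ι :=
      mem_altMatrices_iff.2 ⟨hMsymm.sub hBsymm, by rw [diag_sub, hMdiag, sub_self]⟩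
    exact hMdet (hsing M ((AffineSubspace.vsub_right_mem_direction_iff_mem hB M).1 (halt hMB)))
  obtain ⟨hnot_even, hdiag⟩ : ¬ Even (Fintype.card ι) ∧ B.diag = 0 := by
    simpa using mt (isDiagOfInvertibleSymm_of_even_card_or_ne_zero B.diag) hB_diag
  exact ⟨Nat.not_even_iff_odd.mp hnot_even, mem_altMatrices_iff.2 ⟨hBsymm, hdiag⟩⟩

theorem stmt11_general {K : Type*} [Field K] (hchar : ringChar K = 2) (n : ℕ)
    (𝒮 : AffineSubspace K (Matrix (Fin n) (Fin n) K))
    (hne : (𝒮 : Set (Matrix (Fin n) (Fin n) K)).Nonempty)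
    (hsymm : ∀ M ∈ 𝒮, M.IsSymm)
    (hsing : ∀ M ∈ 𝒮, M.det = 0) :
    (Odd n ∧ (𝒮 : Set (Matrix (Fin n) (Fin n) K)) =
        {M | ∀ X : Fin n → K, X ⬝ᵥ M *ᵥ X = 0}) ∨
    (∃ H : Submodule K (Fin n → K), IsCoatom H ∧
      ¬ ({N : Matrix (Fin n) (Fin n) K | (∀ X : Fin n → K, X ⬝ᵥ N *ᵥ X = 0) ∧
            ∀ X ∈ H, ∀ Y ∈ H, X ⬝ᵥ N *ᵥ Y = 0} ⊆
          (matHyp 𝒮.direction H : Set (Matrix (Fin n) (Fin n) K)))) := by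
  have := ringChar.of_eq hchar
  by_cases h : ∃ H, IsCoatom H ∧ ¬ matHyp (altMatrices K (Fin n)) H ≤ matHyp 𝒮.direction H
  · exact Or.inr h
  push Not at h
  have halt := altMatrices_le_of_forall_matHyp_le _ h
  have h𝒮 {B} (hB : B ∈ 𝒮) :=
    odd_card_and_mem_altMatrices_of_altMatrices_le_direction hsymm hsing halt hB
  obtain ⟨A, hA⟩ := hne
  refine Or.inl ⟨by simpa using (h𝒮 hA).1, Set.ext fun B => ⟨fun hB => (h𝒮 hB).2, fun hB => ?_⟩⟩
  exact (AffineSubspace.vsub_right_mem_direction_iff_mem hA B).1 (halt (sub_mem hB (h𝒮 hA).2))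

/-- Over a field of characteristic 2: if `𝒮` is a nonempty affine subspace of singular
symmetric `n × n` matrices (`n ≥ 2`), with direction `S`, then either `n` is odd and `𝒮`
is the full space of alternating matrices, or there is a linear hyperplane `H` of `Kⁿ`
such that `S_H` does not contain `(Alt_n(K))_H`. -/
theorem stmt11 {K : Type*} [Field K] (hchar : ringChar K = 2) (n : ℕ) (hn : 2 ≤ n)
    (𝒮 : AffineSubspace K (Matrix (Fin n) (Fin n) K))
    (hne : (𝒮 : Set (Matrix (Fin n) (Fin n) K)).Nonempty)
    (hsymm : ∀ M ∈ 𝒮, M.IsSymm)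
    (hsing : ∀ M ∈ 𝒮, M.det = 0) :
    (Odd n ∧ (𝒮 : Set (Matrix (Fin n) (Fin n) K)) =
        {M | ∀ X : Fin n → K, X ⬝ᵥ M *ᵥ X = 0}) ∨
    (∃ H : Submodule K (Fin n → K), IsCoatom H ∧
      ¬ ({N : Matrix (Fin n) (Fin n) K | (∀ X : Fin n → K, X ⬝ᵥ N *ᵥ X = 0) ∧
            ∀ X ∈ H, ∀ Y ∈ H, X ⬝ᵥ N *ᵥ Y = 0} ⊆
          (matHyp 𝒮.direction H : Set (Matrix (Fin n) (Fin n) K)))) :=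
  stmt11_general hchar n 𝒮 hne hsymm hsing
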